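/- arXiv:2409.01337 — 2 statements merged into one kernel-verified Lean document; each statement's English description precedes it below -/
import Mathlib

section
/- (Discrete additivity lemma) For any j ∈ ℝ, λ, μ > 0, and a, b ≥ 0 with a + b > 0, the infimum over φ ≥ 0 of Γ_{λ, aφ}(j) + Γ_{bφ, μ}(j) equals Γ_{bλ/(a+b), aμ/(a+b)}(j). -/
noncomputable def Psi (a b : ℝ) : EReal :=
  if 0 < a ∧ 0 < b then ((a * Real.log (a / b) + b - a : ℝ) : EReal)
  else if a = 0 ∧ 0 ≤ b then ((b : ℝ) : EReal)
  else ⊤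

noncomputable def Gamma (l1 l2 j : ℝ) : EReal :=
  if 0 < l1 ∧ 0 < l2 then
    ((j * Real.arsinh (j / (2 * Real.sqrt (l1 * l2)))
      - (j / 2) * Real.log (l1 / l2)
      - Real.sqrt (j^2 + 4 * l1 * l2) + l1 + l2 : ℝ) : EReal)
  else if 0 < l1 ∧ l2 = 0 then Psi j l1
  else if l1 = 0 ∧ 0 < l2 then Psi (-j) l2
  else ⊤

lemma legendre_pos (j θ l1 l2 X : ℝ) (hl1 : 0 < l1) (hl2 : 0 < l2) (hX : 0 < X)
    (hroot : l1*X - l2/X = j) :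
    j*θ - l1*(Real.exp θ - 1) - l2*(Real.exp (-θ) - 1)
      ≤ j*Real.log X - l1*(X-1) - l2*(1/X-1) := by
  set δ := θ - Real.log X with hδ
  have hθ : θ = Real.log X + δ := by rw [hδ]; ring
  have hexp : Real.exp θ = X * Real.exp δ := by
    rw [hθ, Real.exp_add, Real.exp_log hX]
  have hexp' : Real.exp (-θ) = Real.exp (-δ) / X := by
    rw [hθ, neg_add, Real.exp_add, Real.exp_neg, Real.exp_log hX]
    ring
  have e1 : 0 ≤ l1*X*(Real.exp δ - 1 - δ) :=
    mul_nonneg (mul_pos hl1 hX).le (by nlinarith [Real.add_one_le_exp δ])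
  have e2 : 0 ≤ l2/X*(Real.exp (-δ) - 1 + δ) :=
    mul_nonneg (div_pos hl2 hX).le (by nlinarith [Real.add_one_le_exp (-δ)])
  rw [hexp, hexp', hθ, ← hroot]
  have hX' : X ≠ 0 := hX.ne'
  have key : (l1*X - l2/X)*Real.log X - l1*(X-1) - l2*(1/X-1)
      - ((l1*X - l2/X)*(Real.log X + δ) - l1*(X*Real.exp δ - 1) - l2*(Real.exp (-δ)/X - 1))
      = l1*X*(Real.exp δ - 1 - δ) + l2/X*(Real.exp (-δ) - 1 + δ) := by
    field_simp
    ring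
  rw [← sub_nonneg]
  rw [key]
  exact add_nonneg e1 e2

lemma gamma_eq (j l1 l2 X : ℝ) (hl1 : 0 < l1) (hl2 : 0 < l2) (hX : 0 < X)
    (hroot : l1*X - l2/X = j) :
    Gamma l1 l2 j = ((j*Real.log X - l1*(X-1) - l2*(1/X-1) : ℝ) : EReal) := by
  rw [Gamma, if_pos ⟨hl1, hl2⟩, EReal.coe_eq_coe_iff]
  have hX' : X ≠ 0 := hX.ne'
  set r := Real.sqrt (l1*l2) with hrdef
  have hr : 0 < r := Real.sqrt_pos.mpr (mul_pos hl1 hl2)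
  have hr2 : r^2 = l1*l2 := Real.sq_sqrt (mul_pos hl1 hl2).le
  have hsum : 0 < l1*X + l2/X := by positivity
  have hs : Real.sqrt (j^2 + 4*l1*l2) = l1*X + l2/X := by
    have : j^2 + 4*l1*l2 = (l1*X + l2/X)^2 := by
      rw [← hroot]; field_simp; ring
    rw [this, Real.sqrt_sq hsum.le]
  have harsinh : Real.arsinh (j/(2*r)) = Real.log (l1*X/r) := by
    rw [Real.arsinh]
    have h1 : Real.sqrt (1 + (j/(2*r))^2) = (l1*X + l2/X)/(2*r) := by
      have : 1 + (j/(2*r))^2 = ((l1*X + l2/X)/(2*r))^2 := by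
        rw [← hroot]; field_simp; linear_combination (4*X^2)*hr2
      rw [this, Real.sqrt_sq (by positivity)]
    rw [h1, ← hroot]
    congr 1
    field_simp
    ring
  rw [harsinh, hs]
  have hlogr : Real.log r = (Real.log l1 + Real.log l2)/2 := by
    rw [hrdef, Real.log_sqrt (mul_pos hl1 hl2).le, Real.log_mul hl1.ne' hl2.ne']
  have h2 : Real.log (l1*X/r) = Real.log l1 + Real.log X - Real.log r := by
    rw [Real.log_div (by positivity) hr.ne', Real.log_mul hl1.ne' hX']
  have h3 : Real.log (l1/l2) = Real.log l1 - Real.log l2 :=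
    Real.log_div hl1.ne' hl2.ne'
  rw [h2, h3, hlogr, ← hroot]
  field_simp
  ring

lemma gamma_root (j l1 l2 : ℝ) (hl1 : 0 < l1) (hl2 : 0 < l2) :
    ∃ Y : ℝ, 0 < Y ∧ l1*Y - l2/Y = j := by
  set s := Real.sqrt (j^2 + 4*l1*l2) with hsdef
  have hs2 : s^2 = j^2 + 4*l1*l2 := Real.sq_sqrt (by positivity)
  have hsj : |j| < s := by
    rw [hsdef, ← Real.sqrt_sq_eq_abs]
    exact Real.sqrt_lt_sqrt (sq_nonneg j) (by nlinarith [mul_pos hl1 hl2])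
  have hjs : 0 < j + s := by
    have := abs_lt.mp hsj
    linarith [this.1]
  refine ⟨(j+s)/(2*l1), by positivity, ?_⟩
  have ha1 : l1*((j+s)/(2*l1)) = (j+s)/2 := by field_simp
  have ha2 : l2/((j+s)/(2*l1)) = (s-j)/2 := by
    rw [div_div_eq_mul_div, div_eq_div_iff hjs.ne' two_ne_zero]
    linear_combination -hs2
  rw [ha1, ha2]; ring

lemma half_le_psi (q c θ : ℝ) (hc : 0 < c) :
    ((q*θ - c*(Real.exp θ - 1) : ℝ) : EReal) ≤ Psi q c := by
  rcases lt_trichotomy q 0 with hq | hq | hq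
  · have h1 : ¬ (0 < q ∧ 0 < c) := by rintro ⟨h, _⟩; linarith
    have h2 : ¬ (q = 0 ∧ 0 ≤ c) := by rintro ⟨h, _⟩; linarith
    rw [Psi, if_neg h1, if_neg h2]
    exact le_top
  · subst hq
    rw [Psi, if_neg (by rintro ⟨h, _⟩; linarith), if_pos ⟨rfl, hc.le⟩,
      EReal.coe_le_coe_iff]
    nlinarith [Real.exp_pos θ]
  · rw [Psi, if_pos ⟨hq, hc⟩, EReal.coe_le_coe_iff]
    set δ := θ - Real.log (q/c) with hδ
    have hqc : 0 < q/c := div_pos hq hc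
    have hθ : θ = Real.log (q/c) + δ := by rw [hδ]; ring
    have hexp : Real.exp θ = q/c * Real.exp δ := by
      rw [hθ, Real.exp_add, Real.exp_log hqc]
    rw [hexp, hθ]
    have e1 : 0 ≤ q*(Real.exp δ - 1 - δ) :=
      mul_nonneg hq.le (by nlinarith [Real.add_one_le_exp δ])
    have key : q * Real.log (q/c) + c - q - (q*(Real.log (q/c) + δ) - c*(q/c*Real.exp δ - 1))
        = q*(Real.exp δ - 1 - δ) := by
      field_simp
      ring
    rw [← sub_nonneg, key]
    exact e1

lemma legendre_le_gamma (j θ l1 l2 : ℝ) (h1 : 0 ≤ l1) (h2 : 0 ≤ l2) :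
    ((j*θ - l1*(Real.exp θ - 1) - l2*(Real.exp (-θ) - 1) : ℝ) : EReal) ≤ Gamma l1 l2 j := by
  rcases h1.lt_or_eq with hl1 | hl1
  · rcases h2.lt_or_eq with hl2 | hl2
    · obtain ⟨X, hX, hroot⟩ := gamma_root j l1 l2 hl1 hl2
      rw [gamma_eq j l1 l2 X hl1 hl2 hX hroot, EReal.coe_le_coe_iff]
      exact legendre_pos j θ l1 l2 X hl1 hl2 hX hroot
    · rw [Gamma, if_neg (by rintro ⟨_, h⟩; linarith), if_pos ⟨hl1, hl2.symm⟩]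
      have : j*θ - l1*(Real.exp θ - 1) - l2*(Real.exp (-θ) - 1)
          = j*θ - l1*(Real.exp θ - 1) := by rw [← hl2]; ring
      rw [this]
      exact half_le_psi j l1 θ hl1
  · rcases h2.lt_or_eq with hl2 | hl2
    · rw [Gamma, if_neg (by rintro ⟨h, _⟩; linarith), if_neg (by rintro ⟨h, _⟩; linarith),
        if_pos ⟨hl1.symm, hl2⟩]
      have : j*θ - l1*(Real.exp θ - 1) - l2*(Real.exp (-θ) - 1)
          = (-j)*(-θ) - l2*(Real.exp (-θ) - 1) := by rw [← hl1]; ring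
      rw [this]
      exact half_le_psi (-j) l2 (-θ) hl2
    · rw [Gamma, if_neg (by rintro ⟨h, _⟩; linarith), if_neg (by rintro ⟨_, h⟩; linarith),
        if_neg (by rintro ⟨h, _⟩; linarith)]
      exact le_top

lemma gamma_nonneg (j l1 l2 : ℝ) (h1 : 0 ≤ l1) (h2 : 0 ≤ l2) : (0 : EReal) ≤ Gamma l1 l2 j := by
  have := legendre_le_gamma j 0 l1 l2 h1 h2
  simpa using this

theorem discrete_additivity (j lam mu a b : ℝ) (hlam : 0 < lam) (hmu : 0 < mu)
    (ha : 0 ≤ a) (hb : 0 ≤ b) (hab : 0 < a + b) :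
    (⨅ (φ : {φ : ℝ // 0 ≤ φ}), Gamma lam (a * φ.1) j + Gamma (b * φ.1) mu j)
      = Gamma (b * lam / (a + b)) (a * mu / (a + b)) j := by
  rcases ha.lt_or_eq with hA | hA
  · rcases hb.lt_or_eq with hB | hB
    · -- main case: 0 < a, 0 < b
      have hl1 : 0 < b * lam / (a + b) := by positivity
      have hl2 : 0 < a * mu / (a + b) := by positivity
      obtain ⟨Y, hY, hroot⟩ := gamma_root j (b * lam / (a + b)) (a * mu / (a + b)) hl1 hl2
      have hab' : (a + b) ≠ 0 := hab.ne'
      have hpoly : b*lam*Y^2 = (a+b)*(j*Y) + a*mu := by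
        have h := hroot
        field_simp at h
        refine mul_left_cancel₀ hab' ?_
        linear_combination (a+b)*h
      set x := (b*Y + a)/(a+b) with hxdef
      have hx : 0 < x := by positivity
      set y := Y/x with hydef
      have hy : 0 < y := div_pos hY hx
      have hxy : x * y = Y := by rw [hydef]; field_simp
      have hid1 : lam*(x-1) = (b * lam / (a + b))*(Y-1) := by
        rw [hxdef]; field_simp; ring
      have hid2 : mu*(1/y-1) = (a * mu / (a + b))*(1/Y-1) := by
        rw [hydef, hxdef]; field_simp; ring
      have hid3 : a/x + b*y = a+b := by
        rw [hydef, hxdef]; field_simp; ring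
      have hlog : Real.log x + Real.log y = Real.log Y := by
        rw [← Real.log_mul hx.ne' hy.ne', hxy]
      have hlogj : j*Real.log x + j*Real.log y = j*Real.log Y := by
        rw [← mul_add, hlog]
      have hgt := gamma_eq j (b * lam / (a + b)) (a * mu / (a + b)) Y hl1 hl2 hY hroot
      have h4 : lam*x - j = (a * mu / (a + b))/Y + a*lam/(a+b) := by
        have h5 : lam * x = (b * lam / (a + b))*Y + a*lam/(a+b) := by
          rw [hxdef]; field_simp
        rw [h5]; linarith [hroot]
      have hlx : 0 < lam*x - j := by rw [h4]; positivity
      apply le_antisymm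
      · -- inf ≤ target
        set φ := x*(lam*x - j)/a with hφdef
        have hφ : 0 < φ := by positivity
        have haφ : a*φ = x*(lam*x - j) := by rw [hφdef]; field_simp
        have haφ' : 0 < a*φ := by rw [haφ]; positivity
        have hbφ : 0 < b*φ := by positivity
        have hr1 : lam*x - (a*φ)/x = j := by
          rw [haφ]
          field_simp
          ring
        have e1 : (b*φ)*y = b*(mu + lam*Y)/(a+b) := by
          rw [hφdef, hydef, h4, hxdef]
          field_simp
        have e2 : mu/y = mu*(b*Y+a)/((a+b)*Y) := by
          rw [hydef, hxdef]
          field_simp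
        have hr2 : (b*φ)*y - mu/y = j := by
          rw [e1, e2]
          field_simp
          linear_combination hpoly
        refine iInf_le_of_le ⟨φ, hφ.le⟩ ?_
        show Gamma lam (a*φ) j + Gamma (b*φ) mu j ≤ Gamma (b * lam / (a + b)) (a * mu / (a + b)) j
        rw [gamma_eq j lam (a*φ) x hlam haφ' hx hr1,
            gamma_eq j (b*φ) mu y hbφ hmu hy hr2, hgt, ← EReal.coe_add,
            EReal.coe_le_coe_iff]
        have hzero : (a*φ)*(1/x-1) + (b*φ)*(y-1) = 0 := by
          have h6 : (a*φ)*(1/x-1) + (b*φ)*(y-1) = φ*((a/x + b*y) - (a+b)) := by ring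
          rw [h6, hid3]; ring
        linarith [hid1, hid2, hzero, hlogj]
      · refine le_iInf fun φ' => ?_
        obtain ⟨φ₀, hφ₀⟩ := φ'
        show Gamma (b * lam / (a + b)) (a * mu / (a + b)) j ≤ Gamma lam (a*φ₀) j + Gamma (b*φ₀) mu j
        have L1 := legendre_le_gamma j (Real.log x) lam (a*φ₀) hlam.le (by positivity)
        have L2 := legendre_le_gamma j (Real.log y) (b*φ₀) mu (by positivity) hmu.le
        rw [Real.exp_log hx] at L1
        rw [Real.exp_log hy] at L2
        have hex : Real.exp (-Real.log x) = 1/x := by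
          rw [Real.exp_neg, Real.exp_log hx, one_div]
        have hey : Real.exp (-Real.log y) = 1/y := by
          rw [Real.exp_neg, Real.exp_log hy, one_div]
        rw [hex] at L1
        rw [hey] at L2
        have hsum := add_le_add L1 L2
        rw [← EReal.coe_add] at hsum
        refine le_trans ?_ hsum
        rw [hgt, EReal.coe_le_coe_iff]
        have hzero : (a*φ₀)*(1/x-1) + (b*φ₀)*(y-1) = 0 := by
          have h6 : (a*φ₀)*(1/x-1) + (b*φ₀)*(y-1) = φ₀*((a/x + b*y) - (a+b)) := by ring
          rw [h6, hid3]; ring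
        linarith [hid1, hid2, hzero, hlogj]
    · -- b = 0
      have hB' : b = 0 := hB.symm
      subst hB'
      have ht1 : (0:ℝ) * lam / (a + 0) = 0 := by simp
      have ht2 : a * mu / (a + 0) = mu := by field_simp; ring
      rw [ht1, ht2]
      apply le_antisymm
      · rcases lt_or_ge j lam with hj | hj
        · refine iInf_le_of_le ⟨(lam - j)/a, div_nonneg (by linarith) hA.le⟩ ?_
          show Gamma lam (a * ((lam - j)/a)) j + Gamma (0 * ((lam - j)/a)) mu j ≤ Gamma 0 mu j
          have haφ : a * ((lam - j)/a) = lam - j := by field_simp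
          rw [haφ, zero_mul]
          have h0 : Gamma lam (lam - j) j = ((0:ℝ) : EReal) := by
            have hr : lam*1 - (lam - j)/1 = j := by rw [mul_one, div_one]; ring
            rw [gamma_eq j lam (lam - j) 1 hlam (by linarith) one_pos hr]
            norm_num
          rw [h0]
          simp
        · have htop : Gamma 0 mu j = ⊤ := by
            rw [Gamma, if_neg (by rintro ⟨h, _⟩; exact lt_irrefl 0 h),
              if_neg (by rintro ⟨h, _⟩; exact lt_irrefl 0 h), if_pos ⟨rfl, hmu⟩,
              Psi, if_neg (by rintro ⟨h, _⟩; linarith), if_neg (by rintro ⟨h, _⟩; linarith)]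
          rw [htop]
          exact le_top
      · refine le_iInf fun φ' => ?_
        have h1 := gamma_nonneg j lam (a*φ'.1) hlam.le (mul_nonneg hA.le φ'.2)
        calc Gamma 0 mu j = 0 + Gamma 0 mu j := (zero_add _).symm
          _ ≤ Gamma lam (a*φ'.1) j + Gamma (0*φ'.1) mu j := by
              rw [show (0:ℝ)*φ'.1 = 0 by ring]
              exact add_le_add h1 le_rfl
  · -- a = 0
    have hA' : a = 0 := hA.symm
    subst hA'
    have hB : 0 < b := by linarith
    have ht1 : b * lam / (0 + b) = lam := by field_simp; ring
    have ht2 : (0:ℝ) * mu / (0 + b) = 0 := by simp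
    rw [ht1, ht2]
    apply le_antisymm
    · rcases lt_or_ge (-mu) j with hj | hj
      · refine iInf_le_of_le ⟨(mu + j)/b, div_nonneg (by linarith) hB.le⟩ ?_
        show Gamma lam (0 * ((mu + j)/b)) j + Gamma (b * ((mu + j)/b)) mu j ≤ Gamma lam 0 j
        have hbφ : b * ((mu + j)/b) = mu + j := by field_simp
        rw [hbφ, zero_mul]
        have h0 : Gamma (mu + j) mu j = ((0:ℝ) : EReal) := by
          have hr : (mu + j)*1 - mu/1 = j := by rw [mul_one, div_one]; ring
          rw [gamma_eq j (mu + j) mu 1 (by linarith) hmu one_pos hr]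
          norm_num
        rw [h0]
        simp
      · have hj' : j < 0 := by linarith
        have htop : Gamma lam 0 j = ⊤ := by
          rw [Gamma, if_neg (by rintro ⟨_, h⟩; exact lt_irrefl 0 h),
            if_pos ⟨hlam, rfl⟩, Psi, if_neg (by rintro ⟨h, _⟩; linarith),
            if_neg (by rintro ⟨h, _⟩; linarith)]
        rw [htop]
        exact le_top
    · refine le_iInf fun φ' => ?_
      have h1 := gamma_nonneg j (b*φ'.1) mu (mul_nonneg hB.le φ'.2) hmu.le
      calc Gamma lam 0 j = Gamma lam 0 j + 0 := (add_zero _).symm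
        _ ≤ Gamma lam (0*φ'.1) j + Gamma (b*φ'.1) mu j := by
            rw [show (0:ℝ)*φ'.1 = 0 by ring]
            exact add_le_add le_rfl h1
end

section
/- For λ_L, λ_R > 0, N ≥ 1, and j ∈ ℝ, the infimum over all nonnegative sequences φ₀,…,φ_{N+1} with φ₀ = λ_L and φ_{N+1} = λ_R of ∑_{x=0}^{N} Γ_{φ_x, φ_{x+1}}(j) equals Γ_{λ_L/(N+1), λ_R/(N+1)}(j). -/
open Real

private lemma ecoe_sum (s : Finset ℕ) (f : ℕ → ℝ) :
    (((∑ x ∈ s, f x : ℝ)) : EReal) = ∑ x ∈ s, ((f x : ℝ) : EReal) := by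
  induction s using Finset.cons_induction with
  | empty => simp
  | cons a s ha ih => rw [Finset.sum_cons, Finset.sum_cons, EReal.coe_add, ih]

private lemma root_eq {l1 l2 X j : ℝ} (h1 : 0 < l1) (h2 : 0 < l2) (hX : 0 < X)
    (h : X^2 = j*X + l1*l2) : Real.sqrt (j^2 + 4*l1*l2) = 2*X - j := by
  have h2Xj : 0 < 2*X - j := by nlinarith [mul_pos h1 h2]
  rw [show j^2+4*l1*l2 = (2*X-j)^2 by nlinarith]
  exact Real.sqrt_sq h2Xj.le

private lemma gamma_eq_s13 {l1 l2 j θ : ℝ} (h1 : 0 < l1) (h2 : 0 < l2)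
    (hθ : l1 * Real.exp θ - l2 * Real.exp (-θ) = j) :
    Gamma l1 l2 j
      = ((j*θ - l1*(Real.exp θ - 1) - l2*(Real.exp (-θ) - 1) : ℝ) : EReal) := by
  have hX : 0 < l1 * Real.exp θ := mul_pos h1 (exp_pos θ)
  set X := l1 * Real.exp θ with hXdef
  have hexpneg : l2 * Real.exp (-θ) = l1 * l2 / X := by
    rw [Real.exp_neg]; field_simp [hXdef]; ring
  have hq : X^2 = j*X + l1*l2 := by
    have h := hθ
    rw [hexpneg] at h
    field_simp at h
    nlinarith [h]
  have hS : Real.sqrt (j^2 + 4*l1*l2) = 2*X - j := root_eq h1 h2 hX hq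
  have hθval : θ = Real.log X - Real.log l1 := by
    have h : Real.exp θ = X / l1 := by rw [hXdef]; field_simp
    rw [← Real.log_exp θ, h, Real.log_div (by positivity) (by positivity)]
  have hs : 0 < Real.sqrt (l1*l2) := Real.sqrt_pos.2 (by positivity)
  have hs2 : Real.sqrt (l1*l2)^2 = l1*l2 := Real.sq_sqrt (by positivity)
  have hlogs : Real.log (Real.sqrt (l1*l2)) = (Real.log l1 + Real.log l2)/2 := by
    rw [Real.log_sqrt (by positivity), Real.log_mul (by positivity) (by positivity)]
  have harsinh : Real.arsinh (j / (2 * Real.sqrt (l1*l2)))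
      = Real.log X - (Real.log l1 + Real.log l2)/2 := by
    rw [← hlogs, Real.arsinh]
    have h1' : 1 + (j / (2 * Real.sqrt (l1*l2)))^2
        = (j^2 + 4*l1*l2) / (2*Real.sqrt (l1*l2))^2 := by
      rw [div_pow, mul_pow, hs2]
      field_simp
      ring
    rw [h1', Real.sqrt_div (by positivity) _, Real.sqrt_sq (by positivity), hS]
    rw [show j / (2*Real.sqrt (l1*l2)) + (2*X - j) / (2*Real.sqrt (l1*l2))
        = X / Real.sqrt (l1*l2) by field_simp; ring]
    rw [Real.log_div (by positivity) (by positivity)]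
  have hsum : l1 * Real.exp θ + l2 * Real.exp (-θ) = 2*X - j := by
    rw [hexpneg, ← hXdef]
    field_simp
    nlinarith [hq]
  simp only [_root_.Gamma, if_pos (And.intro h1 h2)]
  congr 1
  have e1 : l1 * (Real.exp θ - 1) + l2*(Real.exp (-θ) - 1) = 2*X - j - l1 - l2 := by
    nlinarith [hsum]
  rw [harsinh, Real.log_div (by positivity) (by positivity), hS]
  linear_combination (-j) * hθval + e1

private lemma psi_ge (l j θ : ℝ) (hl : 0 < l) :
    ((j*θ - l*(Real.exp θ - 1) : ℝ) : EReal) ≤ Psi j l := by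
  rcases lt_trichotomy j 0 with hj | hj | hj
  · have h : Psi j l = ⊤ := by
      rw [Psi, if_neg (by rintro ⟨h, -⟩; linarith), if_neg (by rintro ⟨h, -⟩; linarith)]
    rw [h]; exact le_top
  · subst hj
    have h : Psi 0 l = ((l:ℝ) : EReal) := by simp [Psi, hl.le]
    rw [h, EReal.coe_le_coe_iff]
    nlinarith [exp_pos θ, hl]
  · have h : Psi j l = ((j * Real.log (j/l) + l - j : ℝ) : EReal) := by
      rw [Psi, if_pos (And.intro hj hl)]
    rw [h, EReal.coe_le_coe_iff]
    have hexp : (j/l) * Real.exp (θ - Real.log (j/l)) = Real.exp θ := by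
      rw [Real.exp_sub, Real.exp_log (by positivity)]
      field_simp
    have key : 0 ≤ j * (Real.exp (θ - Real.log (j/l)) - 1 - (θ - Real.log (j/l))) :=
      mul_nonneg hj.le (by linarith [add_one_le_exp (θ - Real.log (j/l))])
    have hl' : l * ((j/l) * Real.exp (θ - Real.log (j/l))) = j * Real.exp (θ - Real.log (j/l)) := by
      field_simp
    nlinarith [key, hexp, hl']

private lemma gamma_ge {l1 l2 : ℝ} (j θ : ℝ) (h1 : 0 ≤ l1) (h2 : 0 ≤ l2) :
    ((j*θ - l1*(Real.exp θ - 1) - l2*(Real.exp (-θ) - 1) : ℝ) : EReal) ≤ Gamma l1 l2 j := by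
  rcases h1.lt_or_eq with h1 | h1
  · rcases h2.lt_or_eq with h2 | h2
    · -- both positive
      set S := Real.sqrt (j^2 + 4*l1*l2) with hSdef
      have hS2 : S^2 = j^2 + 4*l1*l2 := Real.sq_sqrt (by positivity)
      have hS0 : 0 ≤ S := Real.sqrt_nonneg _
      have hp : 0 < (j + S)/2 := by nlinarith [mul_pos h1 h2]
      have hq : 0 < (S - j)/2 := by nlinarith [mul_pos h1 h2]
      set p := (j + S)/2 with hpdef
      set q := (S - j)/2 with hqdef
      have hpq : p * q = l1 * l2 := by
        rw [hpdef, hqdef]; nlinarith [hS2]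
      set t := Real.log (p / l1) with ht
      have het : Real.exp t = p / l1 := Real.exp_log (by positivity)
      have hent : Real.exp (-t) = l1 / p := by
        rw [Real.exp_neg, het]
        field_simp
      have hθt : l1 * Real.exp t - l2 * Real.exp (-t) = j := by
        rw [het, hent]
        field_simp
        nlinarith [hpq]
      rw [gamma_eq_s13 h1 h2 hθt, EReal.coe_le_coe_iff]
      have e1 : Real.exp θ = Real.exp t * Real.exp (θ - t) := by
        rw [← Real.exp_add]; ring_nf
      have e2 : Real.exp (-θ) = Real.exp (-t) * Real.exp (-(θ - t)) := by
        rw [← Real.exp_add]; ring_nf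
      have k1 : 0 ≤ l1 * Real.exp t * (Real.exp (θ - t) - 1 - (θ - t)) :=
        mul_nonneg (by positivity) (by linarith [add_one_le_exp (θ - t)])
      have k2 : 0 ≤ l2 * Real.exp (-t) * (Real.exp (-(θ - t)) - 1 - (-(θ - t))) :=
        mul_nonneg (by positivity) (by linarith [add_one_le_exp (-(θ - t))])
      rw [e1, e2, ← hθt]
      nlinarith [k1, k2]
    · -- l2 = 0
      subst h2
      have hG : Gamma l1 0 j = Psi j l1 := by
        simp only [_root_.Gamma]
        rw [if_neg (by rintro ⟨-, h⟩; exact lt_irrefl 0 h), if_pos ⟨h1, trivial⟩]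
      rw [hG]
      calc ((j*θ - l1*(Real.exp θ - 1) - 0*(Real.exp (-θ) - 1) : ℝ) : EReal)
          = ((j*θ - l1*(Real.exp θ - 1) : ℝ) : EReal) := by norm_num
        _ ≤ Psi j l1 := psi_ge l1 j θ h1
  · subst h1
    rcases h2.lt_or_eq with h2 | h2
    · -- l1 = 0, l2 > 0
      have hG : Gamma 0 l2 j = Psi (-j) l2 := by
        simp only [_root_.Gamma]
        rw [if_neg (by rintro ⟨h, -⟩; exact lt_irrefl 0 h),
          if_neg (by rintro ⟨h, -⟩; exact lt_irrefl 0 h), if_pos ⟨trivial, h2⟩]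
      rw [hG]
      calc ((j*θ - 0*(Real.exp θ - 1) - l2*(Real.exp (-θ) - 1) : ℝ) : EReal)
          = (((-j)*(-θ) - l2*(Real.exp (-θ) - 1) : ℝ) : EReal) := by norm_num
        _ ≤ Psi (-j) l2 := psi_ge l2 (-j) (-θ) h2
    · -- both zero
      subst h2
      have hG : Gamma 0 0 j = ⊤ := by
        simp only [_root_.Gamma]
        rw [if_neg (by rintro ⟨h, -⟩; exact lt_irrefl 0 h),
          if_neg (by rintro ⟨h, -⟩; exact lt_irrefl 0 h),
          if_neg (by rintro ⟨-, h⟩; exact lt_irrefl 0 h)]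
      rw [hG]; exact le_top

set_option maxHeartbeats 2000000 in
theorem one_dim_rate_function (lamL lamR : ℝ) (hL : 0 < lamL) (hR : 0 < lamR)
    (N : ℕ) (hN : 1 ≤ N) (j : ℝ) :
    (⨅ (φ : {φ : ℕ → ℝ // (∀ x, 0 ≤ φ x) ∧ φ 0 = lamL ∧ φ (N + 1) = lamR}),
        ∑ x ∈ Finset.range (N + 1), Gamma (φ.1 x) (φ.1 (x + 1)) j)
      = Gamma (lamL / (N + 1)) (lamR / (N + 1)) j := by
  have hmpos : (0:ℝ) < (N:ℝ) + 1 := by positivity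
  set m : ℝ := (N:ℝ) + 1 with hmdef
  set A := lamL / m with hAdef
  set B := lamR / m with hBdef
  have hA : 0 < A := div_pos hL hmpos
  have hB : 0 < B := div_pos hR hmpos
  have hLm : lamL = A * m := by rw [hAdef]; field_simp
  have hRm : lamR = B * m := by rw [hBdef]; field_simp
  set S := Real.sqrt (j^2 + 4*A*B) with hSdef
  have hS2 : S^2 = j^2 + 4*A*B := Real.sq_sqrt (by positivity)
  have hS0 : 0 ≤ S := Real.sqrt_nonneg _
  have hp : 0 < (j+S)/2 := by nlinarith [mul_pos hA hB]
  have hq : 0 < (S-j)/2 := by nlinarith [mul_pos hA hB]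
  set E := ((j+S)/2)/A with hEdef
  have hE : 0 < E := by positivity
  set θs := Real.log E with hts
  have hexpE : Real.exp θs = E := Real.exp_log hE
  have hexpnE : Real.exp (-θs) = E⁻¹ := by rw [Real.exp_neg, hexpE]
  have hAE : A * E = (j+S)/2 := by rw [hEdef]; field_simp
  have hprod : ((S-j)/2) * ((j+S)/2) = A*B := by linear_combination ((1:ℝ)/4)*hS2
  have hSE : ((S-j)/2) * E = B := by
    rw [hEdef, ← mul_div_assoc, hprod, mul_comm]
    exact mul_div_cancel_right₀ B hA.ne'
  have hBE : B * E⁻¹ = (S-j)/2 := by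
    rw [← hSE, mul_assoc, mul_inv_cancel₀ hE.ne', mul_one]
  have hθs : A * Real.exp θs - B * Real.exp (-θs) = j := by
    rw [hexpE, hexpnE, hAE, hBE]; ring
  set c := (E - 1)/m with hcdef
  have hcm : c * m = E - 1 := by rw [hcdef]; field_simp
  set w : ℕ → ℝ := fun x => 1 + c * (x:ℝ) with hwdef
  have hw0 : w 0 = 1 := by simp [hwdef]
  have hwM : w (N+1) = E := by
    show 1 + c * ((N+1 : ℕ):ℝ) = E
    push_cast
    rw [← hmdef]
    linarith [hcm]
  have hwpos : ∀ x : ℕ, x ≤ N+1 → 0 < w x := by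
    intro x hx
    have hxm : (x:ℝ) ≤ m := by
      rw [hmdef]; exact_mod_cast Nat.cast_le.mpr hx
    have hx0 : (0:ℝ) ≤ (x:ℝ) := Nat.cast_nonneg x
    show 0 < 1 + c * (x:ℝ)
    rcases le_or_gt 0 c with h | h
    · nlinarith
    · have h2 : c * m ≤ c * (x:ℝ) := mul_le_mul_of_nonpos_left hxm h.le
      linarith [hcm, hE]
  set θf : ℕ → ℝ := fun x => Real.log (w (x+1)) - Real.log (w x) with hθfdef
  have hexpθf : ∀ x : ℕ, x ≤ N → Real.exp (θf x) = w (x+1) / w x := by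
    intro x hx
    show Real.exp (Real.log (w (x+1)) - Real.log (w x)) = _
    rw [Real.exp_sub, Real.exp_log (hwpos (x+1) (by omega)), Real.exp_log (hwpos x (by omega))]
  have hexpnθf : ∀ x : ℕ, x ≤ N → Real.exp (-(θf x)) = w x / w (x+1) := by
    intro x hx
    have : -(θf x) = Real.log (w x) - Real.log (w (x+1)) := by
      show -(Real.log (w (x+1)) - Real.log (w x)) = _; ring
    rw [this, Real.exp_sub, Real.exp_log (hwpos (x+1) (by omega)), Real.exp_log (hwpos x (by omega))]
  have hwstep : ∀ x : ℕ, w (x+1) = w x + c := by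
    intro x
    show 1 + c * ((x+1 : ℕ):ℝ) = 1 + c * (x:ℝ) + c
    push_cast; ring
  -- telescoping identity
  have tele : ∀ φ : ℕ → ℝ, φ 0 = lamL → φ (N+1) = lamR →
      ∑ x ∈ Finset.range (N+1),
        (j * θf x - φ x * (Real.exp (θf x) - 1) - φ (x+1) * (Real.exp (-(θf x)) - 1))
      = j*θs - A*(E - 1) - B*(E⁻¹ - 1) := by
    intro φ hb0 hbM
    have hsum : ∑ x ∈ Finset.range (N+1),
        (j * θf x - φ x * (Real.exp (θf x) - 1) - φ (x+1) * (Real.exp (-(θf x)) - 1))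
        = ∑ x ∈ Finset.range (N+1),
          ((fun y => j * Real.log (w y) + c * φ y / w y) (x+1)
            - (fun y => j * Real.log (w y) + c * φ y / w y) x) := by
      refine Finset.sum_congr rfl ?_
      intro x hx
      have hx' : x ≤ N := Nat.lt_succ_iff.mp (Finset.mem_range.mp hx)
      have hwx : 0 < w x := hwpos x (by omega)
      have hwx1 : 0 < w (x+1) := hwpos (x+1) (by omega)
      rw [hexpθf x hx', hexpnθf x hx']
      simp only [hθfdef]
      rw [hwstep x] at hwx1 ⊢
      field_simp
      ring
    rw [hsum, Finset.sum_range_sub (fun y => j * Real.log (w y) + c * φ y / w y) (N+1)]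
    try dsimp only
    rw [hw0, hwM, hb0, hbM, Real.log_one, ← hts, hLm, hRm]
    have hEinv : E * E⁻¹ = 1 := mul_inv_cancel₀ hE.ne'
    linear_combination (B*E⁻¹ - A)*hcm + B*hEinv
  -- the optimal profile
  set l : ℕ → ℝ := fun x => lamL * w x - j * (x:ℝ) with hldef
  set φs : ℕ → ℝ := fun x => if x ≤ N+1 then w x * l x else lamR with hφsdef
  have hl0 : l 0 = lamL := by simp [hldef, hw0]
  have hlM : l (N+1) = m * ((S-j)/2) := by
    show lamL * w (N+1) - j * ((N+1:ℕ):ℝ) = _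
    rw [hwM]
    push_cast
    rw [← hmdef, hLm]
    linear_combination m * hAE
  have hlpos : ∀ x : ℕ, x ≤ N+1 → 0 < l x := by
    intro x hx
    have hxm : (x:ℝ) ≤ m := by rw [hmdef]; exact_mod_cast Nat.cast_le.mpr hx
    have hx0 : (0:ℝ) ≤ (x:ℝ) := Nat.cast_nonneg x
    have hlin : l x = lamL + (lamL * c - j) * (x:ℝ) := by
      show lamL * (1 + c*(x:ℝ)) - j * (x:ℝ) = _
      ring
    have hlMpos : 0 < lamL + (lamL * c - j) * m := by
      have h3 : lamL + (lamL * c - j) * m = m * ((S-j)/2) := by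
        rw [hLm]
        linear_combination m * hAE + A * m * hcm
      rw [h3]
      positivity
    rw [hlin]
    rcases le_or_gt 0 (lamL * c - j) with h | h
    · nlinarith
    · have h2 : (lamL * c - j) * m ≤ (lamL * c - j) * (x:ℝ) := mul_le_mul_of_nonpos_left hxm h.le
      linarith [hlMpos]
  have hφstrict : ∀ x : ℕ, x ≤ N+1 → 0 < φs x := by
    intro x hx
    simp only [hφsdef]
    rw [if_pos hx]
    exact mul_pos (hwpos x hx) (hlpos x hx)
  have hφpos : ∀ x, 0 ≤ φs x := by
    intro x
    by_cases hx : x ≤ N+1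
    · exact (hφstrict x hx).le
    · simp only [hφsdef]
      rw [if_neg hx]
      exact hR.le
  have hφ0 : φs 0 = lamL := by
    simp only [hφsdef]
    rw [if_pos (Nat.zero_le _), hw0, hl0]
    ring
  have hφM : φs (N+1) = lamR := by
    simp only [hφsdef]
    rw [if_pos le_rfl, hwM, hlM, hRm]
    linear_combination m * hSE
  have hedge : ∀ x ∈ Finset.range (N+1),
      Gamma (φs x) (φs (x+1)) j
        = ((j * θf x - φs x * (Real.exp (θf x) - 1) - φs (x+1) * (Real.exp (-(θf x)) - 1) : ℝ) : EReal) := by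
    intro x hx
    have hx' : x ≤ N := Nat.lt_succ_iff.mp (Finset.mem_range.mp hx)
    have h1 := hφstrict x (by omega)
    have h2 := hφstrict (x+1) (by omega)
    have hwx : 0 < w x := hwpos x (by omega)
    have hwx1 : 0 < w (x+1) := hwpos (x+1) (by omega)
    apply gamma_eq_s13 h1 h2
    rw [hexpθf x hx', hexpnθf x hx']
    simp only [hφsdef]
    rw [if_pos (show x ≤ N+1 by omega), if_pos (show x+1 ≤ N+1 by omega)]
    have expand : w x * l x * (w (x+1) / w x) - w (x+1) * l (x+1) * (w x / w (x+1))
        = w (x+1) * l x - w x * l (x+1) := by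
      field_simp
    rw [expand]
    simp only [hldef, hwdef]
    push_cast
    ring
  have hval : ∑ x ∈ Finset.range (N+1), Gamma (φs x) (φs (x+1)) j = Gamma A B j := by
    rw [Finset.sum_congr rfl hedge, ← ecoe_sum, tele φs hφ0 hφM,
      gamma_eq_s13 hA hB hθs, hexpE, hexpnE]
  apply le_antisymm
  · exact le_trans (iInf_le _ ⟨φs, hφpos, hφ0, hφM⟩) (le_of_eq hval)
  · refine le_iInf ?_
    rintro ⟨φ, hφpos', hb0, hbM⟩
    rw [gamma_eq_s13 hA hB hθs, hexpE, hexpnE, ← tele φ hb0 hbM, ecoe_sum]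
    exact Finset.sum_le_sum (fun x hx => gamma_ge j (θf x) (hφpos' x) (hφpos' (x+1)))
end
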